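/- Let F, H, K be complex Hilbert spaces and A : F → H, B : F → K bounded linear operators with ker A ⊆ ker B. If range(A*) + range(B*) is a closed subspace of F, then the preimage (B*)⁻¹(range(A*)) is dense in K. -/

import Mathlib

/-!
Let `G = (A, B) : F → H ⊕₂ K`. Its adjoint is `(h, k) ↦ A* h + B* k`, so `range G*` is the closed
subspace `range A* + range B*`, and by the closed range theorem `range G` is closed as well.
If `k` is orthogonal to `(B*)⁻¹(range A*)`, then `(0, k)` is orthogonal to `ker G*`, hence lies in
`closure (range G) = range G`: `(0, k) = (A f, B f)` for some `f`. Then `f ∈ ker A ⊆ ker B`,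
so `k = B f = 0`.
-/

open scoped InnerProductSpace

namespace ContinuousLinearMap

variable {𝕜 E F G : Type*} [RCLike 𝕜]
  [NormedAddCommGroup E] [InnerProductSpace 𝕜 E]
  [NormedAddCommGroup F] [InnerProductSpace 𝕜 F]
  [NormedAddCommGroup G] [InnerProductSpace 𝕜 G]

-- The `L²` product, not `F × G` (sup norm), so that the adjoint is defined.
noncomputable def prodL2 (A : E →L[𝕜] F) (B : E →L[𝕜] G) : E →L[𝕜] WithLp 2 (F × G) :=
  (WithLp.prodContinuousLinearEquiv 2 𝕜 F G).symm ∘L A.prod B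

@[simp]
theorem prodL2_apply (A : E →L[𝕜] F) (B : E →L[𝕜] G) (x : E) :
    A.prodL2 B x = WithLp.toLp 2 (A x, B x) :=
  rfl

variable [CompleteSpace E] [CompleteSpace F] [CompleteSpace G]

theorem exists_norm_le_mul_norm_apply_of_isClosed_range_adjoint (T : E →L[𝕜] F)
    (hT : IsClosed ((adjoint T).range : Set E)) :
    ∃ C > 0, ∀ y ∈ (adjoint T).range, ‖y‖ ≤ C * ‖T y‖ := by
  have : CompleteSpace (adjoint T).range := hT.completeSpace_coe
  obtain ⟨C, hC, hpre⟩ :=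
    ((adjoint T).codRestrict _ (adjoint T).mem_range_self).exists_preimage_norm_le
      fun ⟨_, x, hx⟩ ↦ ⟨x, Subtype.ext hx⟩
  refine ⟨C, hC, fun y hy ↦ ?_⟩
  obtain ⟨x, hx_eq, hx⟩ := hpre ⟨y, hy⟩
  have hxy : adjoint T x = y := congrArg Subtype.val hx_eq
  have key : ‖y‖ * ‖y‖ ≤ (C * ‖T y‖) * ‖y‖ :=
    calc ‖y‖ * ‖y‖ = RCLike.re ⟪x, T y⟫_𝕜 := by
          rw [← adjoint_inner_left, hxy, inner_self_eq_norm_mul_norm]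
      _ ≤ ‖x‖ * ‖T y‖ := (RCLike.re_le_norm _).trans (norm_inner_le_norm _ _)
      _ ≤ (C * ‖y‖) * ‖T y‖ := by gcongr; exact hx
      _ = (C * ‖T y‖) * ‖y‖ := by ring
  rcases (norm_nonneg y).eq_or_lt with h0 | h0
  · rw [← h0]; positivity
  · exact le_of_mul_le_mul_right key h0

theorem isClosed_range_of_isClosed_range_adjoint (T : E →L[𝕜] F)
    (hT : IsClosed ((adjoint T).range : Set E)) : IsClosed (T.range : Set F) := by
  obtain ⟨C, hC, hbound⟩ := T.exists_norm_le_mul_norm_apply_of_isClosed_range_adjoint hT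
  set Y := (adjoint T).range
  have : CompleteSpace Y := hT.completeSpace_coe
  have hrange : (T ∘L Y.subtypeL).range = T.range := by
    refine le_antisymm (LinearMap.range_comp_le_range _ _) ?_
    rintro _ ⟨x, rfl⟩
    obtain ⟨y, hy, z, hz, rfl⟩ := Y.exists_add_mem_mem_orthogonal x
    have hz : T z = 0 := by
      rwa [orthogonal_range, adjoint_adjoint] at hz
    exact ⟨⟨y, hy⟩, by simp [hz]⟩
  rw [← hrange]
  refine AntilipschitzWith.isClosed_range (K := C.toNNReal) ?_ (T ∘L Y.subtypeL).uniformContinuous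
  refine (T ∘L Y.subtypeL).antilipschitz_of_bound fun y ↦ ?_
  simpa [Real.coe_toNNReal _ hC.le] using hbound y y.2

theorem adjoint_prodL2_apply (A : E →L[𝕜] F) (B : E →L[𝕜] G) (u : WithLp 2 (F × G)) :
    adjoint (A.prodL2 B) u = adjoint A u.fst + adjoint B u.snd :=
  ext_inner_left 𝕜 fun x ↦ by
    simp [adjoint_inner_right, inner_add_right]

theorem range_adjoint_prodL2 (A : E →L[𝕜] F) (B : E →L[𝕜] G) :
    (adjoint (A.prodL2 B)).range = (adjoint A).range ⊔ (adjoint B).range := by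
  ext x
  simp only [LinearMap.mem_range, Submodule.mem_sup, coe_coe, adjoint_prodL2_apply]
  constructor
  · rintro ⟨u, rfl⟩
    exact ⟨_, ⟨u.fst, rfl⟩, _, ⟨u.snd, rfl⟩, rfl⟩
  · rintro ⟨_, ⟨h, rfl⟩, _, ⟨k, rfl⟩, rfl⟩
    exact ⟨WithLp.toLp 2 (h, k), rfl⟩

end ContinuousLinearMap

open ContinuousLinearMap

theorem stmt_8 {F H K : Type*}
    [NormedAddCommGroup F] [InnerProductSpace ℂ F] [CompleteSpace F]
    [NormedAddCommGroup H] [InnerProductSpace ℂ H] [CompleteSpace H]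
    [NormedAddCommGroup K] [InnerProductSpace ℂ K] [CompleteSpace K]
    (A : F →L[ℂ] H) (B : F →L[ℂ] K)
    (hker : LinearMap.ker (A : F →ₗ[ℂ] H) ≤ LinearMap.ker (B : F →ₗ[ℂ] K))
    (hcl : IsClosed ((LinearMap.range (ContinuousLinearMap.adjoint A : H →ₗ[ℂ] F) ⊔
      LinearMap.range (ContinuousLinearMap.adjoint B : K →ₗ[ℂ] F) : Submodule ℂ F) : Set F)) :
    Dense {k : K |
      ContinuousLinearMap.adjoint B k ∈ LinearMap.range (ContinuousLinearMap.adjoint A : H →ₗ[ℂ] F)} := by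
  set S := (adjoint A).range.comap (adjoint B : K →ₗ[ℂ] F)
  change Dense (S : Set K)
  rw [Submodule.dense_iff_topologicalClosure_eq_top, Submodule.topologicalClosure_eq_top_iff,
    Submodule.eq_bot_iff]
  intro k hk
  have hG : IsClosed ((A.prodL2 B).range : Set (WithLp 2 (H × K))) :=
    isClosed_range_of_isClosed_range_adjoint _ (by rwa [range_adjoint_prodL2])
  have hmem : WithLp.toLp 2 (0, k) ∈ (adjoint (A.prodL2 B)).kerᗮ := by
    intro u hu
    have hS : u.snd ∈ S := ⟨-u.fst, by
      simpa [adjoint_prodL2_apply, add_eq_zero_iff_neg_eq] using hu⟩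
    simp [(Submodule.mem_orthogonal _ _).1 hk _ hS]
  rw [orthogonal_ker, adjoint_adjoint, hG.submodule_topologicalClosure_eq] at hmem
  obtain ⟨f, hf⟩ := hmem
  obtain ⟨hAf, rfl⟩ := Prod.mk.inj (WithLp.toLp_injective 2 hf : (A f, B f) = (0, k))
  exact hker hAf
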